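/- arXiv:0902.1435 — 2 statements merged into one kernel-verified Lean document; each statement's English description precedes it below -/
import Mathlib

section
/- In a t-diagram with d ≥ 1 (i.e., a configuration of d+3 black points in convex position and d+1 white points inside, in general position, with exactly one white point inside each triangle with black vertices), every white point lies inside at most two boundary triangles A_{i-1}A_iA_{i+1}. -/
/-- A t-diagram with parameter `d`: `d+3` black points in convex position in the plane
(in the cyclic order given by the indices), `d+1` white points inside their convex hull,
all points in general position, and every triangle with black vertices containing
exactly one white point in its interior. -/
structure TDiagram (d : ℕ) where
  black : Fin (d + 3) → ℝ × ℝ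
  white : Fin (d + 1) → ℝ × ℝ
  inj : Function.Injective (Sum.elim black white : Fin (d + 3) ⊕ Fin (d + 1) → ℝ × ℝ)
  genPos : ∀ x y z : Fin (d + 3) ⊕ Fin (d + 1), x ≠ y → x ≠ z → y ≠ z →
    ¬ Collinear ℝ {Sum.elim black white x, Sum.elim black white y, Sum.elim black white z}
  edgeOrder : ∀ i : Fin (d + 3), ∃ f : (ℝ × ℝ) →ₗ[ℝ] ℝ, ∃ c : ℝ,
    f (black i) = c ∧ f (black (i + 1)) = c ∧
    ∀ j : Fin (d + 3), j ≠ i → j ≠ i + 1 → f (black j) < c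
  whiteInside : ∀ w : Fin (d + 1), white w ∈ convexHull ℝ (Set.range black)
  onePerTriangle : ∀ i j k : Fin (d + 3), i ≠ j → i ≠ k → j ≠ k →
    ∃! w : Fin (d + 1), white w ∈ interior (convexHull ℝ {black i, black j, black k})

/-- The (open) boundary triangle `A_{i-1} A_i A_{i+1}` of the black vertex `A_i`. -/
def TDiagram.bTri {d : ℕ} (X : TDiagram d) (i : Fin (d + 3)) : Set (ℝ × ℝ) :=
  interior (convexHull ℝ {X.black (i - 1), X.black i, X.black (i + 1)})

/-! The diagonal `A_{a-1}A_{a+1}` separates `A_a` from every other black point: in barycentric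
coordinates of the triangle `A_{a-1}A_aA_{a+1}`, a black point on the side of `A_a` has positive
`A_a`-coordinate, and the edges at `A_a` make the other two coordinates positive as well, so it
would lie inside the triangle, which no point of a supporting line of the polygon does. Hence the
boundary triangles of non-adjacent vertices lie in opposite closed half-planes of a diagonal and
have disjoint interiors, and on a cycle of length `d + 3 ≥ 4` at most two vertices are pairwise
adjacent. -/

namespace AffineBasis

section CommRing

variable {ι k V : Type*} [Fintype ι] [CommRing k] [AddCommGroup V] [Module k V]

theorem map_sub_eq_sum_coord_mul (b : AffineBasis ι k V) (f : V →ₗ[k] k) (c : k) (x : V) :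
    f x - c = ∑ i, b.coord i x * (f (b i) - c) := by
  conv_lhs => rw [← b.linear_combination_coord_eq_self x]
  simp only [map_sum, map_smul, smul_eq_mul, mul_sub, Finset.sum_sub_distrib,
    ← Finset.sum_mul, b.sum_coord_apply_eq_one, one_mul]

end CommRing

section Real

variable {ι V : Type*} [Fintype ι] [AddCommGroup V] [Module ℝ V]

theorem coord_pos_of_map_lt (b : AffineBasis ι ℝ V) {f : V →ₗ[ℝ] ℝ} {c : ℝ} {j : ι}
    (hb : ∀ i ≠ j, f (b i) = c) (hj : f (b j) < c) {x : V} (hx : f x < c) :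
    0 < b.coord j x := by
  have h := b.map_sub_eq_sum_coord_mul f c x
  rw [Finset.sum_eq_single j (fun i _ hi => by rw [hb i hi, sub_self, mul_zero])
    (fun h => absurd (Finset.mem_univ j) h)] at h
  nlinarith

theorem map_lt_of_coord_pos (b : AffineBasis ι ℝ V) {f : V →ₗ[ℝ] ℝ} {c : ℝ} {x : V}
    (hb : ∀ i, f (b i) ≤ c) (hx : ∀ i, 0 < b.coord i x) {j : ι} (hj : f (b j) < c) :
    f x < c := by
  have h := b.map_sub_eq_sum_coord_mul f c x
  have hneg : ∑ i, b.coord i x * (f (b i) - c) < ∑ _i : ι, (0 : ℝ) :=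
    Finset.sum_lt_sum (fun i _ => mul_nonpos_of_nonneg_of_nonpos (hx i).le (by linarith [hb i]))
      ⟨j, Finset.mem_univ j, mul_neg_of_pos_of_neg (hx j) (by linarith)⟩
  rw [Finset.sum_const_zero] at hneg
  linarith

end Real

end AffineBasis

section Plane

variable {k V P : Type*} [Field k] [AddCommGroup V] [Module k V] [AddTorsor V P]
  [FiniteDimensional k V] (hV : Module.finrank k V = 2) {p₁ p₂ p₃ : P}
  (h : ¬ Collinear k {p₁, p₂, p₃})

noncomputable def AffineBasis.ofNotCollinear : AffineBasis (Fin 3) k P :=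
  have hind := affineIndependent_iff_not_collinear_set.mpr h
  ⟨![p₁, p₂, p₃], hind,
    hind.affineSpan_eq_top_iff_card_eq_finrank_add_one.mpr (by simp [hV])⟩

@[simp]
theorem AffineBasis.coe_ofNotCollinear :
    ⇑(AffineBasis.ofNotCollinear hV h) = ![p₁, p₂, p₃] :=
  rfl

end Plane

theorem Fin.ncard_le_two_of_forall_near {n : ℕ} [NeZero n] (hn : 4 ≤ n) {s : Set (Fin n)}
    (hs : ∀ x ∈ s, ∀ y ∈ s, x = y - 1 ∨ x = y ∨ x = y + 1) : s.ncard ≤ 2 := by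
  have h₁ : (1 : Fin n) ≠ 0 := by simp [Fin.ext_iff, Nat.mod_eq_of_lt (by omega : 1 < n)]
  have h₂ : (2 : Fin n) ≠ 0 := by simp [Fin.ext_iff, Nat.mod_eq_of_lt (by omega : 2 < n)]
  have h₃ : (3 : Fin n) ≠ 0 := by simp [Fin.ext_iff, Nat.mod_eq_of_lt (by omega : 3 < n)]
  by_contra! h
  obtain ⟨a, b, c, ha, hb, hc, hab, hac, hbc⟩ := (Set.two_lt_ncard_iff s.toFinite).mp h
  have := hs a ha b hb
  have := hs a ha c hc
  have := hs b hb c hc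
  -- each case gives `a = b`, `b = c`, `a = c`, or `m = 0` for some `m ∈ {1, 2, 3}`
  grind

theorem Fin.sub_one_ne_add_one {n : ℕ} (a : Fin (n + 3)) : a - 1 ≠ a + 1 := by
  rw [Ne, sub_eq_iff_eq_add, add_assoc, left_eq_add, Fin.ext_iff]
  simp [Fin.val_add, Nat.mod_eq_of_lt (show 2 < n + 3 by omega)]

namespace TDiagram

variable {d : ℕ} (X : TDiagram d)

theorem not_collinear_black {i j k : Fin (d + 3)} (hij : i ≠ j) (hik : i ≠ k) (hjk : j ≠ k) :
    ¬ Collinear ℝ {X.black i, X.black j, X.black k} := by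
  simpa using X.genPos (.inl i) (.inl j) (.inl k) (by simpa) (by simpa) (by simpa)

theorem black_le_of_edge {v : Fin (d + 3)} {f : (ℝ × ℝ) →ₗ[ℝ] ℝ} {c : ℝ}
    (hv : f (X.black v) = c) (hv' : f (X.black (v + 1)) = c)
    (hlt : ∀ j, j ≠ v → j ≠ v + 1 → f (X.black j) < c) (u : Fin (d + 3)) :
    f (X.black u) ≤ c := by
  by_cases h₁ : u = v
  · rw [h₁, hv]
  by_cases h₂ : u = v + 1
  · rw [h₂, hv']
  exact (hlt u h₁ h₂).le

noncomputable def cornerBasis (a : Fin (d + 3)) : AffineBasis (Fin 3) ℝ (ℝ × ℝ) :=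
  AffineBasis.ofNotCollinear (by simp)
    (X.not_collinear_black (j := a) (by simp) (Fin.sub_one_ne_add_one a) (by simp))

@[simp] theorem cornerBasis_zero (a : Fin (d + 3)) : X.cornerBasis a 0 = X.black (a - 1) := rfl

@[simp] theorem cornerBasis_one (a : Fin (d + 3)) : X.cornerBasis a 1 = X.black a := rfl

@[simp] theorem cornerBasis_two (a : Fin (d + 3)) : X.cornerBasis a 2 = X.black (a + 1) := rfl

theorem bTri_eq_coord_pos (a : Fin (d + 3)) :
    X.bTri a = {x | ∀ i, 0 < (X.cornerBasis a).coord i x} := by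
  rw [bTri, ← AffineBasis.interior_convexHull]
  simp only [cornerBasis, AffineBasis.coe_ofNotCollinear, Matrix.range_cons, Matrix.range_empty,
    Set.union_empty, Set.singleton_union]

theorem black_notMem_bTri {a v : Fin (d + 3)} (h₁ : v ≠ a) (h₂ : v ≠ a + 1) :
    X.black v ∉ X.bTri a := by
  intro hin
  rw [bTri_eq_coord_pos] at hin
  obtain ⟨f, c, hv, hv', hlt⟩ := X.edgeOrder v
  have hle : ∀ i, f (X.cornerBasis a i) ≤ c := by
    intro i
    fin_cases i <;> exact X.black_le_of_edge hv hv' hlt _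
  have hnext : f (X.cornerBasis a 2) < c :=
    hlt (a + 1) (Ne.symm h₂) (fun h => h₁ (add_right_cancel h).symm)
  exact (hv ▸ (X.cornerBasis a).map_lt_of_coord_pos hle hin hnext).false

theorem cornerBasis_coord_one_nonpos {a v : Fin (d + 3)} (hv : v ≠ a) :
    (X.cornerBasis a).coord 1 (X.black v) ≤ 0 := by
  by_cases h₁ : v = a - 1
  · rw [h₁, ← X.cornerBasis_zero, (X.cornerBasis a).coord_apply_ne (by decide)]
  by_cases h₂ : v = a + 1
  · rw [h₂, ← X.cornerBasis_two, (X.cornerBasis a).coord_apply_ne (by decide)]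
  by_contra! hγ
  obtain ⟨f, c, hf, hf', hflt⟩ := X.edgeOrder (a - 1)
  rw [sub_add_cancel] at hf' hflt
  have hβ : 0 < (X.cornerBasis a).coord 2 (X.black v) :=
    (X.cornerBasis a).coord_pos_of_map_lt (fun i hi => by fin_cases i <;> simp_all)
      (hflt _ (Fin.sub_one_ne_add_one a).symm (by simp)) (hflt v h₁ hv)
  obtain ⟨g, e, hg, hg', hglt⟩ := X.edgeOrder a
  have hα : 0 < (X.cornerBasis a).coord 0 (X.black v) :=
    (X.cornerBasis a).coord_pos_of_map_lt (fun i hi => by fin_cases i <;> simp_all)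
      (hglt _ (by simp) (Fin.sub_one_ne_add_one a)) (hglt v hv h₂)
  refine X.black_notMem_bTri hv h₂ ?_
  rw [bTri_eq_coord_pos]
  intro i
  fin_cases i <;> assumption

theorem disjoint_bTri {x y : Fin (d + 3)} (h₁ : x ≠ y - 1) (h₂ : x ≠ y)
    (h₃ : x ≠ y + 1) :
    Disjoint (X.bTri x) (X.bTri y) := by
  set b := X.cornerBasis x
  have hy : X.bTri y ⊆ {p | b.coord 1 p ≤ 0} := by
    refine interior_subset.trans
      (convexHull_min ?_ ((convex_Iic 0).affine_preimage (b.coord 1)))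
    rintro _ (rfl | rfl | rfl)
    exacts [X.cornerBasis_coord_one_nonpos h₁.symm, X.cornerBasis_coord_one_nonpos h₂.symm,
      X.cornerBasis_coord_one_nonpos h₃.symm]
  rw [Set.disjoint_left]
  intro p hx hy'
  rw [bTri_eq_coord_pos] at hx
  exact (hx 1).not_ge (hy hy')

end TDiagram

/-- In a t-diagram with `d ≥ 1`, every white point lies inside at most two
boundary triangles `A_{i-1} A_i A_{i+1}`. -/
theorem stmt4 (d : ℕ) (hd : 1 ≤ d) (X : TDiagram d) (w : Fin (d + 1)) :
    Nat.card {i : Fin (d + 3) // X.white w ∈ X.bTri i} ≤ 2 := by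
  refine Fin.ncard_le_two_of_forall_near (s := {i | X.white w ∈ X.bTri i}) (by omega)
    fun x hx y hy => ?_
  by_contra! h
  exact (X.disjoint_bTri h.1 h.2.1 h.2.2).notMem_of_mem_left hx hy
end

section
/- In a t-diagram, a white point B lies inside both boundary triangles of adjacent vertices A_i and A_{i+1} if and only if B lies inside every triangle of the form A_iA_{i+1}A_j (j ≠ i, i+1) and inside no other triangle with black vertices. -/
/-! Orient the black polygon so that every vertex lies on the left of every edge `A_k A_{k+1}`.
Walking along the polygon then keeps the whole arc `A_{u+1}, …, A_{v-1}` on the left of each chord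
`A_u A_v`: were `A_{m+1}` on the right while `A_m` is on the left, `A_v` would lie inside the
triangle `A_u A_m A_{m+1}`, across the supporting line of the edge `A_v A_{v+1}`.
In particular the diagonal `A_{k-1} A_{k+1}` separates `A_k` from all other black points, so a
point inside the boundary triangle of `A_k` lies in no black triangle avoiding `A_k`. Conversely,
if `B` is inside the boundary triangles of `A_i` and `A_{i+1}`, the chords `A_{i+1} A_j` and
`A_j A_i` have these triangles on the same side as `A_i A_{i+1} A_j`, which puts `B` inside it. -/

/-- Twice the signed area of the triangle `abc`, positive when `abc` is counterclockwise. -/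
def orient (a b c : ℝ × ℝ) : ℝ := (b.1 - a.1) * (c.2 - a.2) - (b.2 - a.2) * (c.1 - a.1)

section Orientation

open Filter Topology

variable {a b c x : ℝ × ℝ}

lemma orient_rotate (a b c : ℝ × ℝ) : orient b c a = orient a b c := by unfold orient; ring

lemma orient_swap (a b c : ℝ × ℝ) : orient a c b = -orient a b c := by unfold orient; ring

@[simp] lemma orient_self₁₂ (a c : ℝ × ℝ) : orient a a c = 0 := by unfold orient; ring

@[simp] lemma orient_self₁₃ (a b : ℝ × ℝ) : orient a b a = 0 := by unfold orient; ring

@[simp] lemma orient_self₂₃ (a b : ℝ × ℝ) : orient a b b = 0 := by unfold orient; ring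

lemma orient_add_orient_add_orient (a b c x : ℝ × ℝ) :
    orient b c x + orient c a x + orient a b x = orient a b c := by unfold orient; ring

lemma orient_smul_eq (a b c x : ℝ × ℝ) :
    orient a b c • x = orient b c x • a + orient c a x • b + orient a b x • c := by
  ext <;> simp only [Prod.smul_fst, Prod.smul_snd, Prod.fst_add, Prod.snd_add, smul_eq_mul] <;>
    unfold orient <;> ring

lemma orient_add_smul (a b x v : ℝ × ℝ) (t : ℝ) :
    orient a b (x + t • v) = orient a b x + t * ((b.1 - a.1) * v.2 - (b.2 - a.2) * v.1) := by
  simp only [orient, Prod.fst_add, Prod.snd_add, Prod.smul_fst, Prod.smul_snd, smul_eq_mul]; ring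

lemma orient_smul_add_smul (a b x y : ℝ × ℝ) {s t : ℝ} (hst : s + t = 1) :
    orient a b (s • x + t • y) = s * orient a b x + t * orient a b y := by
  obtain rfl : t = 1 - s := by linarith
  simp only [orient, Prod.fst_add, Prod.snd_add, Prod.smul_fst, Prod.smul_snd, smul_eq_mul]; ring

lemma continuous_orient (a b : ℝ × ℝ) : Continuous (orient a b) := by
  unfold orient; fun_prop

lemma collinear_of_orient_eq_zero (h : orient a b c = 0) : Collinear ℝ {a, b, c} := by
  rcases eq_or_ne a b with rfl | hab
  · simpa using collinear_pair ℝ a c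
  have hv : (b.1 - a.1) ^ 2 + (b.2 - a.2) ^ 2 ≠ 0 := by
    intro h0
    exact hab (Prod.ext (by nlinarith [sq_nonneg (b.1 - a.1), sq_nonneg (b.2 - a.2)])
      (by nlinarith [sq_nonneg (b.1 - a.1), sq_nonneg (b.2 - a.2)]))
  rw [collinear_iff_of_mem (Set.mem_insert a _)]
  refine ⟨b - a, ?_⟩
  simp only [Set.mem_insert_iff, Set.mem_singleton_iff, forall_eq_or_imp, forall_eq]
  refine ⟨⟨0, by simp⟩, ⟨1, by simp⟩,
    ⟨((c.1 - a.1) * (b.1 - a.1) + (c.2 - a.2) * (b.2 - a.2)) /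
      ((b.1 - a.1) ^ 2 + (b.2 - a.2) ^ 2), ?_⟩⟩
  unfold orient at h
  ext <;> simp only [vadd_eq_add, Prod.fst_add, Prod.snd_add, Prod.smul_fst, Prod.smul_snd,
    Prod.fst_sub, Prod.snd_sub, smul_eq_mul] <;> field_simp
  · linear_combination -(b.2 - a.2) * h
  · linear_combination (b.1 - a.1) * h

lemma orient_ne_zero_of_not_collinear (h : ¬ Collinear ℝ {a, b, c}) : orient a b c ≠ 0 :=
  fun h0 => h (collinear_of_orient_eq_zero h0)

lemma orient_mul_sub_eq_orient_mul_sub (f : (ℝ × ℝ) →ₗ[ℝ] ℝ) (hab : f a = f b)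
    (x y : ℝ × ℝ) : orient a b x * (f y - f a) = orient a b y * (f x - f a) := by
  have hf : ∀ z : ℝ × ℝ, f z = z.1 * f (1, 0) + z.2 * f (0, 1) := fun z => by
    conv_lhs =>
      rw [show z = z.1 • ((1 : ℝ), (0 : ℝ)) + z.2 • ((0 : ℝ), (1 : ℝ)) by ext <;> simp]
    simp only [map_add, map_smul, smul_eq_mul]
  rw [hf a, hf b] at hab
  rw [hf x, hf y, hf a]
  unfold orient
  linear_combination ((x.1 - a.1) * (y.2 - a.2) - (x.2 - a.2) * (y.1 - a.1)) * hab

variable {s : Set (ℝ × ℝ)} {e : ℝ}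

lemma convex_setOf_nonneg_mul_orient (e : ℝ) (a b : ℝ × ℝ) :
    Convex ℝ {y | 0 ≤ e * orient a b y} := by
  intro x hx y hy α β hα hβ hαβ
  simp only [Set.mem_ofPred_eq, orient_smul_add_smul a b x y hαβ] at hx hy ⊢
  nlinarith [mul_nonneg hα hx, mul_nonneg hβ hy]

lemma nonneg_of_mem_convexHull (hs : ∀ y ∈ s, 0 ≤ e * orient a b y)
    (hx : x ∈ convexHull ℝ s) : 0 ≤ e * orient a b x :=
  convexHull_min hs (convex_setOf_nonneg_mul_orient e a b) hx

lemma pos_of_mem_interior_convexHull (he : e ≠ 0) (hab : a ≠ b)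
    (hs : ∀ y ∈ s, 0 ≤ e * orient a b y) (hx : x ∈ interior (convexHull ℝ s)) :
    0 < e * orient a b x := by
  -- Moving from `x` along `v` lowers `e * orient a b` at rate `e² ‖b - a‖²`.
  set v : ℝ × ℝ := e • (b.2 - a.2, a.1 - b.1)
  have hnorm : 0 < (b.1 - a.1) ^ 2 + (b.2 - a.2) ^ 2 := by
    rcases ne_or_eq a.1 b.1 with h1 | h1
    · have := sub_ne_zero.2 h1.symm; positivity
    · have := sub_ne_zero.2 fun h2 => hab (Prod.ext h1 h2.symm); positivity
  have hpath : Tendsto (fun t : ℝ => x + t • v) (𝓝 0) (𝓝 x) :=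
    Continuous.tendsto' (f := fun t : ℝ => x + t • v) (by fun_prop) 0 x (by simp)
  obtain ⟨t, ht, ht0⟩ := ((hpath.eventually (mem_interior_iff_mem_nhds.1 hx)).filter_mono
    nhdsWithin_le_nhds |>.and (self_mem_nhdsWithin (s := Set.Ioi (0 : ℝ)))).exists
  have hmove := nonneg_of_mem_convexHull hs ht
  rw [orient_add_smul] at hmove
  simp only [v, Prod.smul_fst, Prod.smul_snd, smul_eq_mul] at hmove
  have : 0 < t * (e ^ 2 * ((b.1 - a.1) ^ 2 + (b.2 - a.2) ^ 2)) :=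
    mul_pos ht0 (mul_pos (by positivity) hnorm)
  nlinarith

lemma mem_interior_convexHull_of_pos (ha : 0 < e * orient b c x) (hb : 0 < e * orient c a x)
    (hc : 0 < e * orient a b x) : x ∈ interior (convexHull ℝ {a, b, c}) := by
  have hU :
      IsOpen {y | 0 < e * orient b c y ∧ 0 < e * orient c a y ∧ 0 < e * orient a b y} := by
    refine IsOpen.and ?_ (IsOpen.and ?_ ?_) <;>
      exact isOpen_lt continuous_const (continuous_const.mul (continuous_orient _ _))
  refine interior_maximal ?_ hU ⟨ha, hb, hc⟩
  rintro y ⟨hya, hyb, hyc⟩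
  have hΔ : 0 < e * orient a b c := by
    rw [← orient_add_orient_add_orient a b c y]; linarith
  have he : e ≠ 0 := left_ne_zero_of_mul hΔ.ne'
  have hΔ0 : orient a b c ≠ 0 := right_ne_zero_of_mul hΔ.ne'
  have hweight : ∀ p, 0 < e * p → 0 ≤ p / orient a b c := fun p hp => by
    rw [← mul_div_mul_left p _ he]; exact (div_pos hp hΔ).le
  have hy : y = ∑ k : Fin 3, ![orient b c y / orient a b c, orient c a y / orient a b c,
      orient a b y / orient a b c] k • ![a, b, c] k := calc
    y = (orient a b c)⁻¹ • (orient a b c • y) := by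
      rw [smul_smul, inv_mul_cancel₀ hΔ0, one_smul]
    _ = _ := by
      simp [orient_smul_eq a b c y, Fin.sum_univ_three, smul_add, smul_smul, div_eq_inv_mul]
  rw [hy]
  refine (convex_convexHull ℝ _).sum_mem (fun k _ => ?_) ?_
    (fun k _ => subset_convexHull ℝ _ ?_)
  · fin_cases k
    exacts [hweight _ hya, hweight _ hyb, hweight _ hyc]
  · simp only [Fin.sum_univ_three, Matrix.cons_val]
    rw [← add_div, ← add_div, orient_add_orient_add_orient, div_self hΔ0]
  · fin_cases k <;> simp

end Orientation

section ConvexPolygon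

variable {n : ℕ}

structure IsConvexPolygon (A : Fin (n + 3) → ℝ × ℝ) : Prop where
  orient_ne_zero : ∀ i j k, i ≠ j → i ≠ k → j ≠ k → orient (A i) (A j) (A k) ≠ 0
  supporting_edge : ∀ k, ∃ f : (ℝ × ℝ) →ₗ[ℝ] ℝ, ∃ c : ℝ,
    f (A k) = c ∧ f (A (k + 1)) = c ∧ ∀ j, j ≠ k → j ≠ k + 1 → f (A j) < c

def polygonOrientation (A : Fin (n + 3) → ℝ × ℝ) : ℝ := orient (A 0) (A 1) (A 2)

def boundaryTriangle (A : Fin (n + 3) → ℝ × ℝ) (k : Fin (n + 3)) : Set (ℝ × ℝ) :=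
  interior (convexHull ℝ {A (k - 1), A k, A (k + 1)})

open scoped Fin.CommRing

namespace Fin

lemma add_natCast_ne_add_natCast (u : Fin (n + 3)) {s t : ℕ} (hs : s < n + 3) (ht : t < n + 3)
    (hst : s ≠ t) : u + (s : Fin (n + 3)) ≠ u + t := by
  intro h
  have := congrArg Fin.val (add_left_cancel h)
  rw [Fin.val_natCast, Fin.val_natCast, Nat.mod_eq_of_lt hs, Nat.mod_eq_of_lt ht] at this
  exact hst this

lemma add_one_ne_self (k : Fin (n + 3)) : k + 1 ≠ k := by simp

lemma add_two_ne_self (k : Fin (n + 3)) : k + 2 ≠ k := by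
  simpa using Fin.add_natCast_ne_add_natCast k (s := 2) (t := 0) (by omega) (by omega) (by omega)

lemma add_two_ne_add_one (k : Fin (n + 3)) : k + 2 ≠ k + 1 := by
  simpa using Fin.add_natCast_ne_add_natCast k (s := 2) (t := 1) (by omega) (by omega) (by omega)

lemma sub_one_ne_add_one_s6 (k : Fin (n + 3)) : k - 1 ≠ k + 1 := by
  convert Fin.add_natCast_ne_add_natCast (k - 1) (s := 0) (t := 2) (by omega) (by omega) (by omega)
    using 1 <;> push_cast <;> ring

lemma sub_one_ne_self (k : Fin (n + 3)) : k - 1 ≠ k := by simp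

lemma forall_of_add_one {P : Fin (n + 3) → Prop} (h₀ : P 0) (h : ∀ k, P k → P (k + 1)) :
    ∀ k, P k := by
  intro k
  induction k using Fin.induction with
  | zero => exact h₀
  | succ k ih => exact Fin.coeSucc_eq_succ ▸ h _ ih

end Fin

lemma boundaryTriangle_add_one (A : Fin (n + 3) → ℝ × ℝ) (k : Fin (n + 3)) :
    boundaryTriangle A (k + 1) = interior (convexHull ℝ {A k, A (k + 1), A (k + 2)}) := by
  rw [boundaryTriangle, add_sub_cancel_right, add_assoc, one_add_one_eq_two]

namespace IsConvexPolygon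

variable {A : Fin (n + 3) → ℝ × ℝ}

lemma injective (hA : IsConvexPolygon A) : Function.Injective A := by
  intro i j hij
  by_contra hne
  obtain ⟨k, hki, hkj⟩ : ∃ k, k ≠ i ∧ k ≠ j := by
    by_cases hj : j = i + 1
    · exact ⟨i + 2, Fin.add_two_ne_self i, hj ▸ Fin.add_two_ne_add_one i⟩
    · exact ⟨i + 1, by simp, Ne.symm hj⟩
  exact hA.orient_ne_zero i j k hne hki.symm hkj.symm (by rw [hij]; simp)

lemma orient_mul_orient_pos (hA : IsConvexPolygon A) {k m m' : Fin (n + 3)} (hm : m ≠ k)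
    (hm₁ : m ≠ k + 1) (hm' : m' ≠ k) (hm'₁ : m' ≠ k + 1) :
    0 < orient (A k) (A (k + 1)) (A m) * orient (A k) (A (k + 1)) (A m') := by
  obtain ⟨f, c, hk, hk₁, hlt⟩ := hA.supporting_edge k
  set P := orient (A k) (A (k + 1)) (A m)
  set Q := orient (A k) (A (k + 1)) (A m')
  have hQ : Q ≠ 0 := hA.orient_ne_zero k (k + 1) m' (by simp) hm'.symm hm'₁.symm
  have key : P * (f (A m') - c) = Q * (f (A m) - c) := by
    simpa only [hk] using orient_mul_sub_eq_orient_mul_sub f (hk.trans hk₁.symm) (A m) (A m')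
  have hneg : P * Q * (f (A m') - c) < 0 := by
    rw [show P * Q * (f (A m') - c) = Q * Q * (f (A m) - c) by linear_combination Q * key]
    exact mul_neg_of_pos_of_neg (mul_self_pos.2 hQ) (sub_neg.2 (hlt m hm hm₁))
  by_contra hle
  exact hneg.not_ge
    (mul_nonneg_of_nonpos_of_nonpos (not_lt.1 hle) (sub_neg.2 (hlt m' hm' hm'₁)).le)

lemma orient_edge_pos (hA : IsConvexPolygon A) {k m : Fin (n + 3)} (hm : m ≠ k)
    (hm₁ : m ≠ k + 1) : 0 < polygonOrientation A * orient (A k) (A (k + 1)) (A m) := by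
  refine Fin.forall_of_add_one (P := fun k => ∀ m, m ≠ k → m ≠ k + 1 →
    0 < polygonOrientation A * orient (A k) (A (k + 1)) (A m))
    (fun m hm hm₁ => ?_) (fun k ih m hm hm₁ => ?_) k m hm hm₁
  · simpa [polygonOrientation] using
      hA.orient_mul_orient_pos (k := 0) (m := 2) (Fin.add_two_ne_self 0)
        (Fin.add_two_ne_add_one 0) hm hm₁
  · have h := ih (k + 2) (Fin.add_two_ne_self k) (Fin.add_two_ne_add_one k)
    rw [← orient_rotate, show k + 2 = k + 1 + 1 by ring] at h
    have hstep := hA.orient_mul_orient_pos (k := k + 1) (m := k) (m' := m)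
      (Fin.add_one_ne_self k).symm
      (by rw [add_assoc, one_add_one_eq_two]; exact (Fin.add_two_ne_self k).symm) hm hm₁
    nlinarith [mul_pos h hstep, sq_nonneg (orient (A (k + 1)) (A (k + 1 + 1)) (A k))]

lemma polygonOrientation_ne_zero (hA : IsConvexPolygon A) : polygonOrientation A ≠ 0 :=
  left_ne_zero_of_mul (hA.orient_edge_pos (k := 0) (m := 2) (Fin.add_two_ne_self 0)
    (Fin.add_two_ne_add_one 0)).ne'

lemma orient_edge_nonneg (hA : IsConvexPolygon A) (k m : Fin (n + 3)) :
    0 ≤ polygonOrientation A * orient (A k) (A (k + 1)) (A m) := by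
  by_cases hm : m = k
  · simp [hm]
  by_cases hm₁ : m = k + 1
  · simp [hm₁]
  exact (hA.orient_edge_pos hm hm₁).le

lemma orient_pos_of_lt (hA : IsConvexPolygon A) (u : Fin (n + 3)) {s t : ℕ} (hs : 0 < s)
    (hst : s < t) (ht : t < n + 3) :
    0 < polygonOrientation A * orient (A u) (A (u + s)) (A (u + t)) := by
  induction s, hs using Nat.le_induction with
  | base =>
    simpa using hA.orient_edge_pos (k := u) (m := u + t)
      (by simpa using Fin.add_natCast_ne_add_natCast u (s := t) (t := 0) ht (by omega) (by omega))
      (by simpa using Fin.add_natCast_ne_add_natCast u (s := t) (t := 1) ht (by omega) (by omega))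
  | succ s hs ih =>
    set v := u + (t : Fin (n + 3))
    set m := u + (s : Fin (n + 3))
    have hm₁ : u + ((s + 1 : ℕ) : Fin (n + 3)) = m + 1 := by push_cast; ring
    have hvm : v ≠ m := Fin.add_natCast_ne_add_natCast u ht (by omega) (by omega)
    have hvm₁ : v ≠ m + 1 := hm₁ ▸ Fin.add_natCast_ne_add_natCast u ht (by omega) (by omega)
    have hm₁u : m + 1 ≠ u := by
      have := Fin.add_natCast_ne_add_natCast u (s := s + 1) (t := 0)
        (by omega) (by omega) (by omega)
      rwa [Nat.cast_zero, add_zero, hm₁] at this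
    have huv : u ≠ v := by
      have := Fin.add_natCast_ne_add_natCast u (s := 0) (t := t) (by omega) ht (by omega)
      rwa [Nat.cast_zero, add_zero] at this
    rw [hm₁]
    by_contra hneg
    have hΔ := hA.orient_ne_zero u (m + 1) v hm₁u.symm huv hvm₁.symm
    have hinside : A v ∈ interior (convexHull ℝ {A u, A m, A (m + 1)}) := by
      refine mem_interior_convexHull_of_pos (hA.orient_edge_pos hvm hvm₁) ?_ (ih (by omega))
      rw [← orient_rotate (A (m + 1)), orient_swap, mul_neg, neg_pos]
      exact lt_of_le_of_ne (not_lt.1 hneg) (mul_ne_zero hA.polygonOrientation_ne_zero hΔ)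
    have hsupport : ∀ y ∈ ({A u, A m, A (m + 1)} : Set (ℝ × ℝ)),
        0 ≤ polygonOrientation A * orient (A v) (A (v + 1)) y := by
      rintro y (rfl | rfl | rfl) <;> exact hA.orient_edge_nonneg v _
    simpa using pos_of_mem_interior_convexHull hA.polygonOrientation_ne_zero
      (hA.injective.ne (Fin.add_one_ne_self v).symm) hsupport hinside

lemma orient_diagonal_nonneg (hA : IsConvexPolygon A) {k m : Fin (n + 3)} (hm : m ≠ k) :
    0 ≤ polygonOrientation A * orient (A (k - 1)) (A (k + 1)) (A m) := by
  obtain ⟨t, ht, rfl⟩ : ∃ t < n + 3, m = k - 1 + t :=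
    ⟨(m - (k - 1)).val, (m - (k - 1)).isLt, by simp⟩
  have hk₁ : k + 1 = k - 1 + ((2 : ℕ) : Fin (n + 3)) := by push_cast; ring
  rw [hk₁]
  rcases (by omega : t = 0 ∨ t = 1 ∨ t = 2 ∨ 2 < t) with rfl | rfl | rfl | h2
  · simp
  · exact absurd (by simp) hm
  · simp
  · exact (hA.orient_pos_of_lt (k - 1) (by norm_num) h2 ht).le

lemma eq_or_eq_or_eq_of_mem_boundaryTriangle (hA : IsConvexPolygon A) {k p q r : Fin (n + 3)}
    {B : ℝ × ℝ} (hB : B ∈ boundaryTriangle A k)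
    (hpqr : B ∈ convexHull ℝ {A p, A q, A r}) :
    k = p ∨ k = q ∨ k = r := by
  by_contra! hk
  obtain ⟨hp, hq, hr⟩ := hk
  have hε := hA.polygonOrientation_ne_zero
  have houtside : 0 ≤ polygonOrientation A * orient (A (k - 1)) (A (k + 1)) B := by
    refine nonneg_of_mem_convexHull ?_ hpqr
    rintro y (rfl | rfl | rfl)
    exacts [hA.orient_diagonal_nonneg hp.symm, hA.orient_diagonal_nonneg hq.symm,
      hA.orient_diagonal_nonneg hr.symm]
  have hinside : 0 < -polygonOrientation A * orient (A (k - 1)) (A (k + 1)) B := by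
    refine pos_of_mem_interior_convexHull (neg_ne_zero.2 hε)
      (hA.injective.ne (Fin.sub_one_ne_add_one_s6 k)) ?_ hB
    rintro y (rfl | rfl | rfl)
    · simp
    · have := hA.orient_edge_pos (k := k - 1) (m := k + 1) (Fin.sub_one_ne_add_one_s6 k).symm
        (by rw [sub_add_cancel]; exact Fin.add_one_ne_self k)
      rw [sub_add_cancel] at this
      rw [orient_swap, neg_mul_neg]
      exact this.le
    · simp
  linarith [neg_mul (polygonOrientation A) (orient (A (k - 1)) (A (k + 1)) B)]

lemma mem_interior_of_mem_boundaryTriangle_add_one (hA : IsConvexPolygon A)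
    {i j : Fin (n + 3)} {B : ℝ × ℝ} (h₁ : B ∈ boundaryTriangle A i)
    (h₂ : B ∈ boundaryTriangle A (i + 1)) (hj : j ≠ i) (hj₁ : j ≠ i + 1) :
    B ∈ interior (convexHull ℝ {A i, A (i + 1), A j}) := by
  rw [boundaryTriangle_add_one] at h₂
  have hε := hA.polygonOrientation_ne_zero
  refine mem_interior_convexHull_of_pos (e := polygonOrientation A) ?_ ?_ ?_
  · refine pos_of_mem_interior_convexHull hε (hA.injective.ne hj₁.symm) ?_ h₁
    rintro y (rfl | rfl | rfl)
    · rw [orient_rotate]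
      exact hA.orient_diagonal_nonneg hj
    · rw [orient_rotate]
      exact hA.orient_edge_nonneg i j
    · simp
  · refine pos_of_mem_interior_convexHull hε (hA.injective.ne hj) ?_ h₂
    rintro y (rfl | rfl | rfl)
    · simp
    · rw [← orient_rotate]
      exact hA.orient_edge_nonneg i j
    · have := hA.orient_diagonal_nonneg (k := i + 1) hj₁
      rwa [add_sub_cancel_right, add_assoc, one_add_one_eq_two, orient_rotate] at this
  · refine pos_of_mem_interior_convexHull hε (hA.injective.ne (Fin.add_one_ne_self i).symm) ?_
      h₂
    rintro y (rfl | rfl | rfl) <;> exact hA.orient_edge_nonneg i _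

end IsConvexPolygon

lemma mem_boundaryTriangle_of_forall_mem_interior {A : Fin (n + 3) → ℝ × ℝ} {i : Fin (n + 3)}
    {B : ℝ × ℝ}
    (h : ∀ j, j ≠ i → j ≠ i + 1 → B ∈ interior (convexHull ℝ {A i, A (i + 1), A j})) :
    B ∈ boundaryTriangle A i ∧ B ∈ boundaryTriangle A (i + 1) := by
  constructor
  · rw [boundaryTriangle, Set.insert_comm, Set.pair_comm]
    exact h (i - 1) (Fin.sub_one_ne_self i) (Fin.sub_one_ne_add_one_s6 i)
  · rw [boundaryTriangle_add_one]
    exact h (i + 2) (Fin.add_two_ne_self i) (Fin.add_two_ne_add_one i)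

end ConvexPolygon

lemma TDiagram.isConvexPolygon {d : ℕ} (X : TDiagram d) : IsConvexPolygon X.black where
  orient_ne_zero i j k hij hik hjk := orient_ne_zero_of_not_collinear <| by
    simpa using X.genPos (.inl i) (.inl j) (.inl k) (by simpa) (by simpa) (by simpa)
  supporting_edge := X.edgeOrder

/-- Equivalence of Definitions 3.5 and 3.6: a white point `B` lies inside both boundary
triangles of the adjacent black vertices `A_i` and `A_{i+1}` if and only if `B` lies inside
every triangle `A_i A_{i+1} A_j` (`j ≠ i, i+1`) and inside no other triangle with black
vertices. -/
theorem stmt6 (d : ℕ) (X : TDiagram d) (i : Fin (d + 3)) (w : Fin (d + 1)) :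
    (X.white w ∈ X.bTri i ∧ X.white w ∈ X.bTri (i + 1)) ↔
    ((∀ j : Fin (d + 3), j ≠ i → j ≠ i + 1 →
        X.white w ∈ interior (convexHull ℝ {X.black i, X.black (i + 1), X.black j})) ∧
     (∀ p q r : Fin (d + 3), p ≠ q → p ≠ r → q ≠ r →
        X.white w ∈ interior (convexHull ℝ {X.black p, X.black q, X.black r}) →
        (i = p ∨ i = q ∨ i = r) ∧ (i + 1 = p ∨ i + 1 = q ∨ i + 1 = r))) := by
  have hA := X.isConvexPolygon
  constructor
  · rintro ⟨h₁, h₂⟩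
    refine ⟨fun j hj hj₁ => hA.mem_interior_of_mem_boundaryTriangle_add_one h₁ h₂ hj hj₁,
      fun p q r _ _ _ hB => ⟨hA.eq_or_eq_or_eq_of_mem_boundaryTriangle h₁ (interior_subset hB),
        hA.eq_or_eq_or_eq_of_mem_boundaryTriangle h₂ (interior_subset hB)⟩⟩
  · exact fun h => mem_boundaryTriangle_of_forall_mem_interior h.1
end
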